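/- Let D₃(a,b,p,q) be the polynomial defined above. Then ∂²_p D₃ · ∂²_q D₃ − (∂_p∂_q D₃)² = −8a³(a−b)²b³, where partial derivatives are with respect to p and q; in particular this Hessian determinant is negative whenever 0 < b < a. -/

import Mathlib

noncomputable def D3 (a b p q : ℝ) : ℝ :=
  a^4*p - 2*a^3*b*p + a^2*b^2*p - a^4*p^2 + 2*a^3*b*p^2 + a^2*b^2*q - 2*a*b^3*q + b^4*q
    - 2*a^2*b^2*p*q + 2*a*b^3*q^2 - b^4*q^2

private lemma quad_deriv (c2 c1 c0 : ℝ) (x : ℝ) :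
    deriv (fun t : ℝ => c2*t^2 + c1*t + c0) x = 2*c2*x + c1 := by
  have h : HasDerivAt (fun t : ℝ => c2*t^2 + c1*t + c0) (2*c2*x + c1) x := by
    have := (((hasDerivAt_pow 2 x).const_mul c2).add
      ((hasDerivAt_id x).const_mul c1)).add_const c0
    refine this.congr_deriv ?_
    push_cast
    ring
  exact h.deriv

private lemma quad_deriv2 (c2 c1 c0 : ℝ) (x : ℝ) :
    deriv (deriv (fun t : ℝ => c2*t^2 + c1*t + c0)) x = 2*c2 := by
  have h : deriv (fun t : ℝ => c2*t^2 + c1*t + c0) = fun t => 2*c2*t + c1 := by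
    funext t; exact quad_deriv c2 c1 c0 t
  rw [h]
  have := quad_deriv 0 (2*c2) c1 x
  simpa using this

/-- The Hessian determinant of `D₃` with respect to `(p,q)` equals `-8a³(a-b)²b³`,
which is negative whenever `0 < b < a`. -/
theorem stmt11 (a b p q : ℝ) :
    (deriv (deriv (fun x => D3 a b x q)) p) * (deriv (deriv (fun y => D3 a b p y)) q)
        - (deriv (fun x => deriv (fun y => D3 a b x y) q) p) ^ 2
      = -8 * a^3 * (a - b)^2 * b^3 ∧
    (0 < b → b < a →
      (deriv (deriv (fun x => D3 a b x q)) p) * (deriv (deriv (fun y => D3 a b p y)) q)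
        - (deriv (fun x => deriv (fun y => D3 a b x y) q) p) ^ 2 < 0) := by
  have hfp : (fun x => D3 a b x q) = fun x =>
      (-a^4 + 2*a^3*b)*x^2 + (a^4 - 2*a^3*b + a^2*b^2 - 2*a^2*b^2*q)*x
      + (a^2*b^2*q - 2*a*b^3*q + b^4*q + 2*a*b^3*q^2 - b^4*q^2) := by
    funext x; simp only [D3]; ring
  have hfq : (fun y => D3 a b p y) = fun y =>
      (2*a*b^3 - b^4)*y^2 + (a^2*b^2 - 2*a*b^3 + b^4 - 2*a^2*b^2*p)*y
      + (a^4*p - 2*a^3*b*p + a^2*b^2*p - a^4*p^2 + 2*a^3*b*p^2) := by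
    funext y; simp only [D3]; ring
  have hmix : (fun x => deriv (fun y => D3 a b x y) q) = fun x =>
      (-2*a^2*b^2)*x + (2*(2*a*b^3 - b^4)*q + a^2*b^2 - 2*a*b^3 + b^4) := by
    funext x
    have : (fun y => D3 a b x y) = fun y =>
        (2*a*b^3 - b^4)*y^2 + (a^2*b^2 - 2*a*b^3 + b^4 - 2*a^2*b^2*x)*y
        + (a^4*x - 2*a^3*b*x + a^2*b^2*x - a^4*x^2 + 2*a^3*b*x^2) := by
      funext y; simp only [D3]; ring
    rw [this, quad_deriv]; ring
  have h1 : deriv (deriv (fun x => D3 a b x q)) p = 2*(-a^4 + 2*a^3*b) := by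
    rw [hfp, quad_deriv2]
  have h2 : deriv (deriv (fun y => D3 a b p y)) q = 2*(2*a*b^3 - b^4) := by
    rw [hfq, quad_deriv2]
  have h3 : deriv (fun x => deriv (fun y => D3 a b x y) q) p = -2*a^2*b^2 := by
    rw [hmix]
    rw [show (fun x => -2*a^2*b^2*x + (2*(2*a*b^3 - b^4)*q + a^2*b^2 - 2*a*b^3 + b^4))
      = fun t : ℝ => (0:ℝ)*t^2 + (-2*a^2*b^2)*t + (2*(2*a*b^3 - b^4)*q + a^2*b^2 - 2*a*b^3 + b^4)
      from by funext t; ring]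
    rw [quad_deriv]; ring
  have key : (deriv (deriv (fun x => D3 a b x q)) p) * (deriv (deriv (fun y => D3 a b p y)) q)
        - (deriv (fun x => deriv (fun y => D3 a b x y) q) p) ^ 2
      = -8 * a^3 * (a - b)^2 * b^3 := by
    rw [h1, h2, h3]; ring
  refine ⟨key, fun hb hab => ?_⟩
  rw [key]
  have ha : 0 < a := hb.trans hab
  have h4 : 0 < 8 * a^3 := by positivity
  have h5 : 0 < (a - b)^2 := by
    have : 0 < a - b := by linarith
    positivity
  have h6 : 0 < b^3 := by positivity
  have := mul_pos (mul_pos h4 h5) h6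
  linarith
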